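/- arXiv:1208.5639 — 2 statements merged into one kernel-verified Lean document; each statement's English description precedes it below -/
import Mathlib

section
/- For every n ≥ 2 there exist a set S ⊆ {0,1}ⁿ and a matrix W ∈ {0,1}^{2×n} such that the convex hull of {Wx : x ∈ S} ⊂ ℝ² has more than √(n/2) vertices (extreme points). -/
/-!
The points `(i, i²)`, `0 ≤ i ≤ t`, lie on a parabola, so each of them is exposed by its tangent
line and all `t + 1` of them are vertices of their convex hull. They are realised as `Wx` with
binary data by using `t + t²` coordinates: the first row of `W` counts the ones among the first
`t` coordinates and the second row those among the next `t²`, and `x` has `i` ones in the first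
block and `i²` in the second. Taking `t = ⌊√(n/2)⌋` gives `t + t² ≤ n` and `t + 1 > √(n/2)`.
-/

section ConvexHull

variable {E : Type*} [AddCommGroup E] [Module ℝ E] {s : Set E} {x : E}

theorem eq_of_mem_convexHull_of_le_of_forall_lt (f : E →ₗ[ℝ] ℝ) (hx : x ∈ s)
    (hlt : ∀ y ∈ s, y ≠ x → f y < f x) {p : E} (hp : p ∈ convexHull ℝ s) (hle : f x ≤ f p) :
    p = x := by
  rw [← Set.insert_eq_of_mem hx, ← Set.insert_sdiff_singleton] at hp
  rcases (s \ {x}).eq_empty_or_nonempty with hrest | hrest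
  · rwa [hrest, insert_empty_eq, convexHull_singleton] at hp
  rw [convexHull_insert hrest, mem_convexJoin] at hp
  obtain ⟨x', hx', q, hq, a, b, ha, hb, hab, rfl⟩ := hp
  rw [Set.mem_singleton_iff] at hx'
  subst x'
  have hfq : f q < f x :=
    convexHull_min (fun y hy => hlt y hy.1 hy.2) (convex_halfSpace_lt f.isLinear (f x)) hq
  rcases hb.eq_or_lt with rfl | hb
  · rw [add_zero] at hab
    simp [hab]
  · simp only [map_add, map_smul, smul_eq_mul] at hle
    obtain rfl : a = 1 - b := by linarith
    nlinarith [mul_pos hb (sub_pos.2 hfq)]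

theorem mem_exposedPoints_convexHull_of_forall_lt [TopologicalSpace E] (l : StrongDual ℝ E)
    (hx : x ∈ s) (hlt : ∀ y ∈ s, y ≠ x → l y < l x) :
    x ∈ (convexHull ℝ s).exposedPoints ℝ := by
  refine ⟨subset_convexHull ℝ s hx, l, fun p hp => ⟨?_, ?_⟩⟩
  · refine convexHull_min (fun y hy => ?_) (convex_halfSpace_le l.toLinearMap.isLinear (l x)) hp
    change l y ≤ l x
    rcases eq_or_ne y x with rfl | hne
    exacts [le_rfl, (hlt y hy hne).le]
  · exact eq_of_mem_convexHull_of_le_of_forall_lt l.toLinearMap hx hlt hp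

end ConvexHull

def parabolaPoint (x : ℝ) : Fin 2 → ℝ := ![x, x ^ 2]

theorem parabolaPoint_injective : Function.Injective parabolaPoint := fun x y h => by
  simpa [parabolaPoint] using congrFun h 0

theorem extremePoints_convexHull_image_parabolaPoint (s : Set ℝ) :
    (convexHull ℝ (parabolaPoint '' s)).extremePoints ℝ = parabolaPoint '' s := by
  refine extremePoints_convexHull_subset.antisymm ?_
  rintro _ ⟨x, hx, rfl⟩
  apply exposedPoints_subset_extremePoints
  -- the tangent line at `x` supports the parabola: `2xy - y² = x² - (x - y)²`
  refine mem_exposedPoints_convexHull_of_forall_lt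
    ((2 * x) • ContinuousLinearMap.proj 0 - ContinuousLinearMap.proj 1) ⟨x, hx, rfl⟩ ?_
  rintro _ ⟨y, -, rfl⟩ hne
  have hxy : y - x ≠ 0 := sub_ne_zero.2 (mt (congrArg parabolaPoint) hne)
  simp only [parabolaPoint, sub_apply, smul_apply,
    ContinuousLinearMap.proj_apply, Matrix.cons_val_zero, Matrix.cons_val_one, smul_eq_mul]
  nlinarith [sq_pos_of_ne_zero hxy]

open Matrix

def intervalIndicator (n a b : ℕ) : Fin n → ℝ :=
  fun j => if a ≤ (j : ℕ) ∧ (j : ℕ) < b then 1 else 0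

theorem intervalIndicator_eq_zero_or_one (n a b : ℕ) (j : Fin n) :
    intervalIndicator n a b j = 0 ∨ intervalIndicator n a b j = 1 := by
  unfold intervalIndicator
  split_ifs <;> simp

theorem sum_intervalIndicator {n b : ℕ} (a : ℕ) (hb : b ≤ n) :
    ∑ j, intervalIndicator n a b j = (b - a : ℕ) := by
  simp only [intervalIndicator]
  rw [Fin.sum_univ_eq_sum_range (fun j => if a ≤ j ∧ j < b then (1 : ℝ) else 0), Finset.sum_boole]
  have hfilter : (Finset.range n).filter (fun j => a ≤ j ∧ j < b) = Finset.Ico a b := by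
    ext j
    simp only [Finset.mem_filter, Finset.mem_range, Finset.mem_Ico]
    omega
  rw [hfilter, Nat.card_Ico]

theorem intervalIndicator_dotProduct {n b d : ℕ} (a c : ℕ) (h : min b d ≤ n) :
    intervalIndicator n a b ⬝ᵥ intervalIndicator n c d = (min b d - max a c : ℕ) := by
  rw [dotProduct, ← sum_intervalIndicator _ h]
  refine Finset.sum_congr rfl fun j _ => ?_
  simp only [intervalIndicator]
  split_ifs <;> simp <;> omega

def parabolaWeights (n t : ℕ) : Matrix (Fin 2) (Fin n) ℝ :=
  of ![intervalIndicator n 0 t, intervalIndicator n t (t + t ^ 2)]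

def parabolaCode (n t i : ℕ) : Fin n → ℝ :=
  intervalIndicator n 0 i + intervalIndicator n t (t + i ^ 2)

theorem parabolaWeights_eq_zero_or_one (n t : ℕ) (k : Fin 2) (j : Fin n) :
    parabolaWeights n t k j = 0 ∨ parabolaWeights n t k j = 1 := by
  fin_cases k <;> exact intervalIndicator_eq_zero_or_one ..

theorem parabolaCode_eq_zero_or_one {n t i : ℕ} (hi : i ≤ t) (j : Fin n) :
    parabolaCode n t i j = 0 ∨ parabolaCode n t i j = 1 := by
  simp only [parabolaCode, Pi.add_apply, intervalIndicator]
  split_ifs <;> norm_num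
  omega

theorem parabolaWeights_mulVec_parabolaCode {n t i : ℕ} (hi : i ≤ t) (htn : t + t ^ 2 ≤ n) :
    parabolaWeights n t *ᵥ parabolaCode n t i = parabolaPoint i := by
  have hi2 : i ^ 2 ≤ t ^ 2 := Nat.pow_le_pow_left hi 2
  ext k
  fin_cases k <;>
    simp only [parabolaWeights, parabolaCode, parabolaPoint, mulVec, dotProduct_add, of_apply] <;>
    simp only [Fin.zero_eta, Fin.mk_one, cons_val_zero, cons_val_one] <;>
    rw [intervalIndicator_dotProduct _ _ (by omega), intervalIndicator_dotProduct _ _ (by omega),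
      ← Nat.cast_add]
  · congr 1
    omega
  · rw [← Nat.cast_pow]
    congr 1
    omega

theorem natSqrt_half_add_sq_le (n : ℕ) : Nat.sqrt (n / 2) + Nat.sqrt (n / 2) ^ 2 ≤ n := by
  have hsq := Nat.sqrt_le' (n / 2)
  have hle : Nat.sqrt (n / 2) ≤ Nat.sqrt (n / 2) ^ 2 := Nat.le_self_pow two_ne_zero _
  omega

theorem sqrt_half_lt_natSqrt_half_add_one (n : ℕ) :
    √((n : ℝ) / 2) < Nat.sqrt (n / 2) + 1 := by
  have hlt : n < 2 * (Nat.sqrt (n / 2) + 1) ^ 2 := by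
    have : n / 2 < (Nat.sqrt (n / 2) + 1) ^ 2 := Nat.lt_succ_sqrt' (n / 2)
    omega
  rw [Real.sqrt_lt' (by positivity), div_lt_iff₀ two_pos]
  exact_mod_cast (mul_comm 2 _ ▸ hlt)

theorem stmt_1_general (n : ℕ) :
    ∃ (S : Set (Fin n → ℝ)) (W : Matrix (Fin 2) (Fin n) ℝ),
      (∀ x ∈ S, ∀ j, x j = 0 ∨ x j = 1) ∧
      (∀ i j, W i j = 0 ∨ W i j = 1) ∧
      Real.sqrt ((n : ℝ) / 2) <
        (Set.extremePoints ℝ (convexHull ℝ (W.mulVec '' S))).ncard := by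
  set t := Nat.sqrt (n / 2)
  refine ⟨parabolaCode n t '' Set.Iic t, parabolaWeights n t, ?_,
    parabolaWeights_eq_zero_or_one n t, ?_⟩
  · rintro _ ⟨i, hi, rfl⟩ j
    exact parabolaCode_eq_zero_or_one hi j
  have himage : (parabolaWeights n t).mulVec '' (parabolaCode n t '' Set.Iic t) =
      parabolaPoint '' ((↑) '' Set.Iic t) := by
    rw [Set.image_image, Set.image_image]
    exact Set.image_congr fun i hi =>
      parabolaWeights_mulVec_parabolaCode hi (natSqrt_half_add_sq_le n)
  rw [himage, extremePoints_convexHull_image_parabolaPoint,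
    Set.ncard_image_of_injective _ parabolaPoint_injective,
    Set.ncard_image_of_injective _ Nat.cast_injective, Set.ncard_Iic_nat]
  exact_mod_cast sqrt_half_lt_natSqrt_half_add_one n

/-- For every `n ≥ 2` there exist `S ⊆ {0,1}ⁿ` and a binary `2 × n` matrix `W`
such that `conv {Wx : x ∈ S} ⊂ ℝ²` has more than `√(n/2)` vertices. -/
theorem stmt_1 (n : ℕ) (hn : 2 ≤ n) :
    ∃ (S : Set (Fin n → ℝ)) (W : Matrix (Fin 2) (Fin n) ℝ),
      (∀ x ∈ S, ∀ j, x j = 0 ∨ x j = 1) ∧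
      (∀ i j, W i j = 0 ∨ W i j = 1) ∧
      Real.sqrt ((n : ℝ) / 2) <
        (Set.extremePoints ℝ (convexHull ℝ (W.mulVec '' S))).ncard :=
  stmt_1_general n
end

section
/- Let k ≥ 2, r = k+1, d ≥ 1, n = k·2^d, W the d×n binary matrix with k copies of each column in {0,1}^d, and S = S^n_r the 0/1-vectors with exactly r ones. Then the image WS equals {0,…,r}^d \ V_0 where V_0 = {0,r}^d, and the set of vertices of conv(WS) consists exactly of those vectors having one entry equal to 1 or r−1 and all other entries in {0, r}; hence conv(WS) has exactly d·2^d vertices. -/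
/-!
A 0/1 vector with `r` ones selects `r` columns of `W`, and `W` maps it to the vector counting, row
by row, the selected columns with a `1` there. Any count vector in `{0,…,r}^d` with a coordinate
strictly between `0` and `r` is realised by suitable columns, while a count vector in `{0,r}^d`
would force all `r` columns to share one pattern, of which there are only `k < r` copies.

A grid point with a coordinate `t ∉ {0, r}` is the midpoint of the two grid points obtained by
moving `t` by `±1`, unless `t ∈ {1, r-1}` is its only non-corner coordinate. Such a point `v`,
next to the corner `c`, is the unique minimiser over the grid of a weighted `ℓ¹`-distance to `c`,
which is affine on the box `[0,r]^d`; hence `v` is a vertex.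
-/

open Finset

section Extreme

variable {𝕜 E : Type*} [Field 𝕜] [LinearOrder 𝕜] [IsStrictOrderedRing 𝕜]
  [AddCommGroup E] [Module 𝕜 E]

theorem lt_combo_of_le_of_lt {a b s p q : 𝕜} (ha : 0 < a) (hb : 0 < b) (hab : a + b = 1)
    (hp : s ≤ p) (hq : s < q) : s < a * p + b * q := by
  have h : a * p + b * q - s = a * (p - s) + b * (q - s) := by linear_combination s * hab
  nlinarith [mul_nonneg ha.le (sub_nonneg.2 hp), mul_pos hb (sub_pos.2 hq)]

theorem convex_insert_setOf_lt (l : E →ₗ[𝕜] 𝕜) (v : E) :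
    Convex 𝕜 (insert v {z | l v < l z}) := by
  refine convex_iff_forall_pos.2 fun x hx y hy a b ha hb hab => ?_
  simp only [Set.mem_insert_iff, Set.mem_ofPred_eq, map_add, map_smul, smul_eq_mul] at hx hy ⊢
  rcases hx with rfl | hx <;> rcases hy with rfl | hy
  · exact Or.inl (Convex.combo_self hab _)
  · exact Or.inr (lt_combo_of_le_of_lt ha hb hab le_rfl hy)
  · exact Or.inr (by rw [add_comm]; exact lt_combo_of_le_of_lt hb ha (by rwa [add_comm]) le_rfl hx)
  · exact Or.inr (lt_combo_of_le_of_lt ha hb hab hx.le hy)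

theorem mem_extremePoints_insert_setOf_lt (l : E →ₗ[𝕜] 𝕜) (v : E) :
    v ∈ (insert v {z | l v < l z}).extremePoints 𝕜 := by
  refine mem_extremePoints_iff_left.2 ⟨Set.mem_insert v _, fun x hx y hy hv => ?_⟩
  by_contra hxv
  have hlx : l v < l x := hx.resolve_left hxv
  have hly : l v ≤ l y := hy.elim (fun h => h ▸ le_rfl) le_of_lt
  obtain ⟨a, b, ha, hb, hab, hv⟩ := hv
  have := lt_combo_of_le_of_lt hb ha (by rwa [add_comm]) hly hlx
  rw [← hv, map_add, map_smul, map_smul, smul_eq_mul, smul_eq_mul, add_comm] at this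
  exact this.ne rfl

theorem mem_extremePoints_convexHull_of_forall_lt {A : Set E} {v : E} (l : E →ₗ[𝕜] 𝕜)
    (hv : v ∈ A) (hl : ∀ p ∈ A, p ≠ v → l v < l p) : v ∈ (convexHull 𝕜 A).extremePoints 𝕜 := by
  have hA : convexHull 𝕜 A ⊆ insert v {z | l v < l z} :=
    convexHull_min (fun p hp => (eq_or_ne p v).imp id (hl p hp)) (convex_insert_setOf_lt l v)
  exact inter_extremePoints_subset_extremePoints_of_subset hA
    ⟨subset_convexHull 𝕜 A hv, mem_extremePoints_insert_setOf_lt l v⟩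

theorem notMem_extremePoints_of_sub_mem_of_add_mem {A : Set E} {v e : E} (he : e ≠ 0)
    (hsub : v - e ∈ A) (hadd : v + e ∈ A) : v ∉ A.extremePoints 𝕜 := fun hv => by
  have : Invertible (2 : 𝕜) := invertibleOfNonzero two_ne_zero
  exact he (by simpa using (hv.2 hsub hadd (mem_openSegment_sub_add (𝕜 := 𝕜) v e)))

end Extreme

section Marked

variable {ι β γ : Type*} [DecidableEq ι]

def markedFun (a b : β → γ) (p : ι × (ι → β)) : ι → γ :=
  fun j => if j = p.1 then a (p.2 j) else b (p.2 j)

theorem markedFun_injective {a b : β → γ} (ha : Function.Injective a)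
    (hb : Function.Injective b) (hab : ∀ x y, a x ≠ b y) :
    Function.Injective (markedFun (ι := ι) a b) := by
  rintro ⟨i, f⟩ ⟨i', f'⟩ h
  have hi : i = i' := by
    by_contra hne
    have := congrFun h i
    simp only [markedFun, if_neg hne, ite_true] at this
    exact hab _ _ this
  subst hi
  refine Prod.ext rfl (funext fun j => ?_)
  have := congrFun h j
  simp only [markedFun] at this
  split_ifs at this
  exacts [ha this, hb this]

theorem range_markedFun (a b : β → γ) :
    Set.range (markedFun (ι := ι) a b) =
      {v | ∃ i, v i ∈ Set.range a ∧ ∀ j, j ≠ i → v j ∈ Set.range b} := by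
  ext v
  constructor
  · rintro ⟨⟨i, f⟩, rfl⟩
    exact ⟨i, ⟨f i, by simp [markedFun]⟩, fun j hj => ⟨f j, by simp [markedFun, hj]⟩⟩
  · rintro ⟨i, ⟨x, hx⟩, hv⟩
    choose g hg using hv
    refine ⟨(i, fun j => if hj : j = i then x else g j hj), funext fun j => ?_⟩
    by_cases hj : j = i
    · subst hj; simp [markedFun, hx]
    · simp [markedFun, hj, hg]

end Marked

def IsGridCoord (r : ℕ) (x : ℝ) : Prop := ∃ t : ℕ, t ≤ r ∧ x = t

namespace IsGridCoord

variable {r : ℕ} {x : ℝ}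

theorem zero : IsGridCoord r 0 := ⟨0, Nat.zero_le r, Nat.cast_zero.symm⟩

theorem self : IsGridCoord r r := ⟨r, le_rfl, rfl⟩

theorem nonneg (hx : IsGridCoord r x) : 0 ≤ x := by
  obtain ⟨t, -, rfl⟩ := hx
  exact t.cast_nonneg

theorem le (hx : IsGridCoord r x) : x ≤ r := by
  obtain ⟨t, ht, rfl⟩ := hx
  exact_mod_cast ht

theorem one_le (hx : IsGridCoord r x) (h0 : x ≠ 0) : 1 ≤ x := by
  obtain ⟨t, -, rfl⟩ := hx
  exact_mod_cast Nat.one_le_iff_ne_zero.2 (by exact_mod_cast h0)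

theorem le_sub_one (hx : IsGridCoord r x) (hr : x ≠ r) : x ≤ r - 1 := by
  obtain ⟨t, ht, rfl⟩ := hx
  have : t + 1 ≤ r := lt_of_le_of_ne ht (by exact_mod_cast hr)
  rw [le_sub_iff_add_le]
  exact_mod_cast this

theorem sub_one (hx : IsGridCoord r x) (h0 : x ≠ 0) : IsGridCoord r (x - 1) := by
  obtain ⟨t, ht, rfl⟩ := hx
  have : t ≠ 0 := by exact_mod_cast h0
  exact ⟨t - 1, by omega, by rw [Nat.cast_pred (Nat.pos_of_ne_zero this)]⟩

theorem add_one (hx : IsGridCoord r x) (hr : x ≠ r) : IsGridCoord r (x + 1) := by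
  obtain ⟨t, ht, rfl⟩ := hx
  have : t ≠ r := by exact_mod_cast hr
  exact ⟨t + 1, by omega, by push_cast; rfl⟩

end IsGridCoord

section Grid

variable (ι : Type*) (r : ℕ)

def nonCornerGrid : Set (ι → ℝ) :=
  {v | (∀ i, IsGridCoord r (v i)) ∧ ¬ ∀ i, v i = 0 ∨ v i = r}

def nearCorner : Set (ι → ℝ) :=
  {v | ∃ i, (v i = 1 ∨ v i = (r : ℝ) - 1) ∧ ∀ j, j ≠ i → (v j = 0 ∨ v j = r)}

variable {ι r}

theorem nearCorner_subset_nonCornerGrid (hr : 2 ≤ r) : nearCorner ι r ⊆ nonCornerGrid ι r := by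
  rintro v ⟨i, hvi, hvj⟩
  have hr' : (2 : ℝ) ≤ r := by exact_mod_cast hr
  refine ⟨fun j => ?_, fun hall => ?_⟩
  · by_cases hj : j = i
    · subst hj
      rcases hvi with h | h <;> rw [h]
      · simpa using IsGridCoord.zero.add_one (r := r) (by positivity)
      · exact IsGridCoord.self.sub_one (by positivity)
    · rcases hvj j hj with h | h <;> rw [h]
      exacts [IsGridCoord.zero, IsGridCoord.self]
  · rcases hall i with h | h <;> rcases hvi with h' | h' <;> rw [h'] at h <;> linarith

/-- For `c` a corner of `[0, r]` or next to one, `inwardSign c * (x - c)` is the distance from `c`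
to `x ∈ [0, r]`, measured towards the interior. -/
noncomputable def inwardSign (c : ℝ) : ℝ := if c ≤ 1 then 1 else -1

theorem inwardSign_mul_sub_of_corner (hr : 2 ≤ r) {x c : ℝ} (hx : IsGridCoord r x)
    (hc : c = 0 ∨ c = r) :
    0 ≤ inwardSign c * (x - c) ∧ (x ≠ c → 1 ≤ inwardSign c * (x - c)) := by
  have hr' : (2 : ℝ) ≤ r := by exact_mod_cast hr
  unfold inwardSign
  rcases hc with rfl | rfl
  · rw [if_pos zero_le_one]
    exact ⟨by linarith [hx.nonneg], fun h => by linarith [hx.one_le h]⟩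
  · rw [if_neg (by linarith)]
    exact ⟨by linarith [hx.le], fun h => by linarith [hx.le_sub_one h]⟩

theorem inwardSign_mul_sub_of_nearCorner (hr : 2 ≤ r) {x c : ℝ} (hx : IsGridCoord r x)
    (hc : c = 1 ∨ c = r - 1) :
    -1 ≤ inwardSign c * (x - c) ∧
      (x ≠ 0 → x ≠ r → x ≠ c → 0 < inwardSign c * (x - c)) := by
  have hr' : (2 : ℝ) ≤ r := by exact_mod_cast hr
  unfold inwardSign
  split_ifs with hc1
  · have hc1 : c = 1 := by rcases hc with rfl | rfl <;> linarith
    subst hc1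
    exact ⟨by linarith [hx.nonneg], fun h0 _ h1 => by
      linarith [lt_of_le_of_ne (hx.one_le h0) (Ne.symm h1)]⟩
  · have hc1 : c = r - 1 := hc.resolve_left (by rintro rfl; exact hc1 le_rfl)
    subst hc1
    exact ⟨by linarith [hx.le], fun _ hr h1 => by
      linarith [lt_of_le_of_ne (hx.le_sub_one hr) h1]⟩

theorem exists_linearMap_lt_of_mem_nearCorner [Fintype ι] [DecidableEq ι] (hr : 2 ≤ r)
    {v : ι → ℝ} (hv : v ∈ nearCorner ι r) :
    ∃ l : (ι → ℝ) →ₗ[ℝ] ℝ, ∀ p ∈ nonCornerGrid ι r, p ≠ v → l v < l p := by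
  obtain ⟨i, hvi, hvj⟩ := hv
  -- Leaving the corner in a coordinate `j ≠ i` costs at least `2`; at most `1` is gained at `i`.
  let u : ι → ℝ := fun j => (if j = i then 1 else 2) * inwardSign (v j)
  refine ⟨dotProductBilin ℝ ℝ u, fun p ⟨hp, hpc⟩ hpv => ?_⟩
  set a : ι → ℝ := fun j => inwardSign (v j) * (p j - v j)
  have hoff : ∀ j ∈ ({i}ᶜ : Finset ι), 0 ≤ a j ∧ (p j ≠ v j → 1 ≤ a j) := fun j hj =>
    inwardSign_mul_sub_of_corner hr (hp j) (hvj j (by simpa using hj))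
  have hat := inwardSign_mul_sub_of_nearCorner hr (hp i) hvi
  have hsplit : u ⬝ᵥ p - u ⬝ᵥ v = a i + ∑ j ∈ {i}ᶜ, 2 * a j := by
    rw [← dotProduct_sub, dotProduct, Fintype.sum_eq_add_sum_compl i]
    refine congrArg₂ _ (by simp [u, a]) (Finset.sum_congr rfl fun j hj => ?_)
    simp [u, a, show j ≠ i by simpa using hj]
    ring
  have hsum_nonneg : 0 ≤ ∑ j ∈ {i}ᶜ, 2 * a j :=
    Finset.sum_nonneg fun j hj => mul_nonneg zero_le_two (hoff j hj).1
  change u ⬝ᵥ v < u ⬝ᵥ p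
  rw [← sub_pos, hsplit]
  by_cases hmoved : ∃ j ≠ i, p j ≠ v j
  · obtain ⟨j, hji, hpj⟩ := hmoved
    have hj : j ∈ ({i}ᶜ : Finset ι) := by simpa using hji
    have : 2 * a j ≤ ∑ j ∈ {i}ᶜ, 2 * a j := Finset.single_le_sum
      (f := fun j => 2 * a j) (fun j hj => mul_nonneg zero_le_two (hoff j hj).1) hj
    linarith [hat.1, (hoff j hj).2 hpj]
  · push Not at hmoved
    have hpi : ¬(p i = 0 ∨ p i = r) := fun h => hpc fun j =>
      if hj : j = i then hj ▸ h else hmoved j hj ▸ hvj j hj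
    have hpv' : p i ≠ v i := fun h => hpv <| funext fun j =>
      if hj : j = i then hj ▸ h else hmoved j hj
    linarith [hat.2 (not_or.1 hpi).1 (not_or.1 hpi).2 hpv']

theorem add_single_mem_nonCornerGrid [DecidableEq ι] {v : ι → ℝ} {j : ι} {δ : ℝ}
    (hv : ∀ i, IsGridCoord r (v i)) (hδ : IsGridCoord r (v j + δ))
    (hnc : ¬((v j + δ = 0 ∨ v j + δ = r) ∧ ∀ i ≠ j, v i = 0 ∨ v i = r)) :
    v + Pi.single j δ ∈ nonCornerGrid ι r := by
  have hcoord : ∀ i, (v + Pi.single j δ : ι → ℝ) i = if i = j then v j + δ else v i := fun i => by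
    by_cases hi : i = j
    · subst hi; simp
    · simp [hi]
  refine ⟨fun i => ?_, fun hall => hnc ⟨?_, fun i hi => ?_⟩⟩
  · rw [hcoord]; split_ifs; exacts [hδ, hv i]
  · simpa [hcoord] using hall j
  · simpa [hcoord, hi] using hall i

theorem exists_sub_single_add_single_mem [DecidableEq ι] {v : ι → ℝ}
    (hv : v ∈ nonCornerGrid ι r) (hvn : v ∉ nearCorner ι r) :
    ∃ j, v - Pi.single j 1 ∈ nonCornerGrid ι r ∧ v + Pi.single j 1 ∈ nonCornerGrid ι r := by
  obtain ⟨hgrid, hnc⟩ := hv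
  push Not at hnc
  obtain ⟨j, hj0, hjr⟩ := hnc
  have hlo := (hgrid j).one_le hj0
  have hhi := (hgrid j).le_sub_one hjr
  refine ⟨j, ?_, add_single_mem_nonCornerGrid hgrid ((hgrid j).add_one hjr) ?_⟩
  · rw [sub_eq_add_neg, ← Pi.single_neg]
    have hsub : IsGridCoord r (v j + -1) := by
      simpa [← sub_eq_add_neg] using (hgrid j).sub_one hj0
    refine add_single_mem_nonCornerGrid hgrid hsub ?_
    rintro ⟨h | h, hcorner⟩
    · exact hvn ⟨j, Or.inl (by linarith), hcorner⟩
    · linarith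
  · rintro ⟨h | h, hcorner⟩
    · linarith
    · exact hvn ⟨j, Or.inr (by linarith), hcorner⟩

theorem extremePoints_convexHull_nonCornerGrid [Fintype ι] [DecidableEq ι] (hr : 2 ≤ r) :
    (convexHull ℝ (nonCornerGrid ι r)).extremePoints ℝ = nearCorner ι r := by
  refine Set.Subset.antisymm (fun v hv => ?_) fun v hv => ?_
  · by_contra hvn
    obtain ⟨j, hsub, hadd⟩ :=
      exists_sub_single_add_single_mem (extremePoints_convexHull_subset hv) hvn
    exact notMem_extremePoints_of_sub_mem_of_add_mem (Pi.single_ne_zero_iff.2 one_ne_zero)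
      (subset_convexHull ℝ _ hsub) (subset_convexHull ℝ _ hadd) hv
  · obtain ⟨l, hl⟩ := exists_linearMap_lt_of_mem_nearCorner hr hv
    exact mem_extremePoints_convexHull_of_forall_lt l (nearCorner_subset_nonCornerGrid hr hv) hl

theorem nearCorner_eq_range_markedFun [DecidableEq ι] :
    nearCorner ι r = Set.range (markedFun (ι := ι) (fun s : Bool => if s then (1 : ℝ) else r - 1)
      (fun s : Bool => if s then (r : ℝ) else 0)) := by
  rw [range_markedFun]
  simp [nearCorner, eq_comm, or_comm]

theorem ncard_nearCorner [Fintype ι] [DecidableEq ι] (hr : 3 ≤ r) :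
    (nearCorner ι r).ncard = Fintype.card ι * 2 ^ Fintype.card ι := by
  have hr' : (3 : ℝ) ≤ r := by exact_mod_cast hr
  rw [nearCorner_eq_range_markedFun, ← Set.image_univ,
    Set.ncard_image_of_injective _ (markedFun_injective ?_ ?_ ?_)]
  · simp
  · rintro (_ | _) (_ | _) h <;> simp at h ⊢ <;> linarith
  · rintro (_ | _) (_ | _) h <;> simp at h ⊢ <;> linarith
  · rintro (_ | _) (_ | _) h <;> simp at h <;> linarith

end Grid

section ColCount

variable {κ ι : Type*}

def colCount (F : Finset (κ × (ι → Bool))) (i : ι) : ℕ := #{c ∈ F | c.2 i}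

theorem colCount_le (F : Finset (κ × (ι → Bool))) (i : ι) : colCount F i ≤ #F :=
  card_filter_le _ _

theorem exists_colCount_ne [Fintype κ] {F : Finset (κ × (ι → Bool))}
    (hF : Fintype.card κ < #F) : ∃ i, colCount F i ≠ 0 ∧ colCount F i ≠ #F := by
  by_contra! h
  obtain ⟨c₀, hc₀⟩ : F.Nonempty := card_pos.1 (by omega)
  have hpattern : ∀ c ∈ F, c.2 = c₀.2 := fun c hc => funext fun i => by
    by_cases h0 : colCount F i = 0
    · have := card_filter_eq_zero_iff.1 h0
      simp only [Bool.not_eq_true] at this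
      rw [this c hc, this c₀ hc₀]
    · have := card_filter_eq_iff.1 (h i h0)
      rw [this c hc, this c₀ hc₀]
  have hsub : F ⊆ (Finset.univ : Finset κ) ×ˢ {c₀.2} := fun c hc =>
    mem_product.2 ⟨mem_univ _, mem_singleton.2 (hpattern c hc)⟩
  have := card_le_card hsub
  simp at this
  omega

theorem exists_colCount_eq {k : ℕ} (t : ι → ℕ)
    (ht : ∀ i, t i ≤ k + 1) {i₀ : ι} (h0 : t i₀ ≠ 0) (hk : t i₀ ≠ k + 1) :
    ∃ F : Finset (Fin k × (ι → Bool)), #F = k + 1 ∧ colCount F = t := by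
  set m := t i₀
  have hmk : m ≤ k := by have := ht i₀; omega
  -- Column `s` has a `1` in row `i` iff `s < t i`; its copy index restarts at `m`, which is
  -- possible because row `i₀` separates the columns below `m` from the others.
  let col : Fin (k + 1) → Fin k × (ι → Bool) := fun s =>
    (⟨if (s : ℕ) < m then s else s - m, by have := s.2; split_ifs <;> omega⟩,
      fun i => decide ((s : ℕ) < t i))
  have hcol : Function.Injective col := fun s s' h => by
    have hside : (s : ℕ) < m ↔ (s' : ℕ) < m := by
      simpa [col, m] using congrFun (congrArg Prod.snd h) i₀
    have hidx := congrArg (fun c => (c.1 : ℕ)) h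
    simp only [col] at hidx
    apply Fin.ext
    split_ifs at hidx <;> omega
  refine ⟨univ.map ⟨col, hcol⟩, by simp, funext fun i => ?_⟩
  rw [colCount, filter_map, card_map]
  simpa [col, Fin.card_filter_val_lt] using ht i

end ColCount

theorem setOf_zero_one_ncard_eq {α : Type*} [Fintype α] [DecidableEq α] (r : ℕ) :
    {x : α → ℝ | (∀ j, x j = 0 ∨ x j = 1) ∧ {j | x j = 1}.ncard = r} =
      (fun F : Finset α => fun j => if j ∈ F then (1 : ℝ) else 0) '' {F | #F = r} := by
  ext x
  constructor
  · rintro ⟨hx, hcard⟩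
    refine ⟨({j | x j = 1} : Finset α), ?_, funext fun j => ?_⟩
    · rw [Set.mem_ofPred_eq, ← hcard, ← Set.ncard_coe_finset]
      simp
    · rcases hx j with h | h <;> simp [h]
  · rintro ⟨F, hF, rfl⟩
    refine ⟨fun j => by by_cases hj : j ∈ F <;> simp [hj], ?_⟩
    simpa using hF

theorem mulVec_indicator_eq_colCount {κ ι : Type*} [Fintype κ] [Fintype ι] [DecidableEq ι]
    [DecidableEq κ] {W : Matrix ι (κ × (ι → Bool)) ℝ}
    (hW : ∀ i c, W i c = if c.2 i then 1 else 0) (F : Finset (κ × (ι → Bool))) :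
    W.mulVec (fun c => if c ∈ F then 1 else 0) = fun i => (colCount F i : ℝ) := by
  funext i
  simp [Matrix.mulVec, dotProduct, hW, colCount, Finset.sum_boole]

theorem mulVec_image_eq_nonCornerGrid {ι : Type*} [Fintype ι] [DecidableEq ι] {k : ℕ}
    {W : Matrix ι (Fin k × (ι → Bool)) ℝ} (hW : ∀ i c, W i c = if c.2 i then 1 else 0) :
    W.mulVec '' {x | (∀ j, x j = 0 ∨ x j = 1) ∧ {j | x j = 1}.ncard = k + 1} =
      nonCornerGrid ι (k + 1) := by
  rw [setOf_zero_one_ncard_eq, Set.image_image]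
  simp_rw [mulVec_indicator_eq_colCount hW]
  ext v
  constructor
  · rintro ⟨F, hF : #F = k + 1, rfl⟩
    refine ⟨fun i => ⟨_, hF ▸ colCount_le F i, rfl⟩, fun hcorner => ?_⟩
    obtain ⟨i, h0, hr⟩ := exists_colCount_ne (F := F) (by simp [hF])
    rw [hF] at hr
    rcases hcorner i with h | h <;> beta_reduce at h
    · exact h0 (by exact_mod_cast h)
    · exact hr (by exact_mod_cast h)
  · rintro ⟨hv, hnc⟩
    choose t ht hvt using hv
    push Not at hnc
    obtain ⟨i₀, h0, hr⟩ := hnc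
    obtain ⟨F, hF, hFt⟩ := exists_colCount_eq t ht (i₀ := i₀)
      (by rintro h; simp [hvt, h] at h0) (by rintro h; simp [hvt, h] at hr)
    exact ⟨F, hF, funext fun i => by simp [hFt, hvt]⟩

theorem stmt_19_general (d k r : ℕ) (hk : 2 ≤ k) (hr : r = k + 1)
    (W : Matrix (Fin d) (Fin k × (Fin d → Bool)) ℝ)
    (hW : ∀ i c, W i c = if c.2 i then 1 else 0)
    (S : Set ((Fin k × (Fin d → Bool)) → ℝ))
    (hS : S = {x | (∀ j, x j = 0 ∨ x j = 1) ∧ {j | x j = 1}.ncard = r}) :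
    W.mulVec '' S = {v : Fin d → ℝ |
        (∀ i, ∃ t : ℕ, t ≤ r ∧ v i = t) ∧ ¬ (∀ i, v i = 0 ∨ v i = r)} ∧
    Set.extremePoints ℝ (convexHull ℝ (W.mulVec '' S)) =
      {v : Fin d → ℝ | ∃ i, (v i = 1 ∨ v i = (r : ℝ) - 1) ∧
        ∀ j, j ≠ i → (v j = 0 ∨ v j = r)} ∧
    (Set.extremePoints ℝ (convexHull ℝ (W.mulVec '' S))).ncard = d * 2 ^ d := by
  subst hr hS
  have himage := mulVec_image_eq_nonCornerGrid hW
  have hvertices := extremePoints_convexHull_nonCornerGrid (ι := Fin d) (r := k + 1) (by omega)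
  refine ⟨himage, ?_, ?_⟩
  · rw [himage]
    exact hvertices
  · rw [himage, hvertices, ncard_nearCorner (by omega), Fintype.card_fin]

/-- For `k ≥ 2`, `r = k+1`, `W` the `d × k·2^d` binary matrix with `k` copies of each
column in `{0,1}^d` and `S` the 0/1-vectors with exactly `r` ones: the image `WS` is
`{0,…,r}^d` minus the vectors with all entries in `{0, r}`; the vertices of
`conv(WS)` are exactly the vectors with one entry equal to `1` or `r−1` and all other
entries in `{0, r}`; hence there are exactly `d·2^d` vertices. -/
theorem stmt_19 (d k r : ℕ) (hd : 1 ≤ d) (hk : 2 ≤ k) (hr : r = k + 1)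
    (W : Matrix (Fin d) (Fin k × (Fin d → Bool)) ℝ)
    (hW : ∀ i c, W i c = if c.2 i then 1 else 0)
    (S : Set ((Fin k × (Fin d → Bool)) → ℝ))
    (hS : S = {x | (∀ j, x j = 0 ∨ x j = 1) ∧ {j | x j = 1}.ncard = r}) :
    W.mulVec '' S = {v : Fin d → ℝ |
        (∀ i, ∃ t : ℕ, t ≤ r ∧ v i = t) ∧ ¬ (∀ i, v i = 0 ∨ v i = r)} ∧
    Set.extremePoints ℝ (convexHull ℝ (W.mulVec '' S)) =
      {v : Fin d → ℝ | ∃ i, (v i = 1 ∨ v i = (r : ℝ) - 1) ∧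
        ∀ j, j ≠ i → (v j = 0 ∨ v j = r)} ∧
    (Set.extremePoints ℝ (convexHull ℝ (W.mulVec '' S))).ncard = d * 2 ^ d :=
  stmt_19_general d k r hk hr W hW S hS
end
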